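/- arXiv:math/0003192 — 4 statements merged into one kernel-verified Lean document; each statement's English description precedes it below -/
import Mathlib

section
/- Let H be analytic on a neighborhood of a point z ∈ ℂ^d with H(z) = 0 and z_d·H_d(z) ≠ 0, and suppose z is a locally minimal point of the zero set of H: there is a neighborhood U of z such that every w ∈ U with H(w) = 0 and |w_j| ≤ |z_j| for all j satisfies |w_j| = |z_j| for all j. Then for every j < d the quantity z_j·H_j(z)/(z_d·H_d(z)) is a nonnegative real number. -/
/-!
Freeze every coordinate of `z` except `z_j` and `z_d`. Since `H_d(z) ≠ 0`, the implicit function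
theorem solves `H = 0` near `z` by `z_d = ψ(z_j)` with `ψ'(z_j) = -H_j(z)/H_d(z)`. Minimality of `z`
says that `|ψ|` has a local minimum at `z_j` on the disc `|x| ≤ |z_j|`, so the real derivative of
`|ψ|²` is nonnegative in every direction `z_j s` with `re s < 0`, which points into the disc.
With `r = z_j H_j / (z_d H_d)` this reads `re (r s) ≤ 0` whenever `re s < 0`, forcing `r ≥ 0`.
-/

open Filter Topology

/-- Partial derivative of `H` in the `j`-th coordinate direction. -/
noncomputable def pdj {m : ℕ} (H : (Fin m → ℂ) → ℂ) (z : Fin m → ℂ) (j : Fin m) : ℂ :=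
  fderiv ℂ H z (Pi.single j 1)

open Metric Function
open scoped ComplexOrder ComplexConjugate

namespace Complex

theorem nonneg_of_forall_re_mul_nonpos {r : ℂ} (h : ∀ s : ℂ, s.re < 0 → (r * s).re ≤ 0) :
    0 ≤ r := by
  have hre : 0 ≤ r.re := by simpa using h (-1) (by norm_num)
  refine nonneg_iff.2 ⟨hre, ?_⟩
  by_contra him
  -- `re (r (-1 + t i)) = -re r - t im r` takes every real value as `t` varies
  have hval : (r * (-1 + ((-(r.re + 1) / r.im : ℝ) : ℂ) * I)).re = 1 := by
    simp only [mul_re, add_re, add_im, neg_re, neg_im, one_re, one_im, mul_im, ofReal_re,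
      ofReal_im, I_re, I_im]
    field_simp [Ne.symm him]
    ring
  linarith [hval ▸ h (-1 + ((-(r.re + 1) / r.im : ℝ) : ℂ) * I) (by simp)]

theorem eventually_norm_one_add_mul_le_one {s : ℂ} (hs : s.re < 0) :
    ∀ᶠ t : ℝ in 𝓝[>] 0, ‖1 + t * s‖ ≤ 1 := by
  have hlt : ∀ᶠ t : ℝ in 𝓝 0, t * normSq s < -2 * s.re :=
    (continuous_mul_const _).continuousAt.eventually_lt continuousAt_const
      (by rw [zero_mul]; linarith)
  filter_upwards [nhdsWithin_le_nhds hlt, self_mem_nhdsWithin] with t ht (htpos : 0 < t)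
  rw [← sq_le_one_iff₀ (norm_nonneg _), ← normSq_eq_norm_sq]
  rw [normSq_apply] at ht ⊢
  simp only [add_re, add_im, one_re, one_im, mul_re, mul_im, ofReal_re, ofReal_im]
  nlinarith

end Complex

section ImplicitCurve

variable {𝕜 : Type*} [NontriviallyNormedField 𝕜] [CompleteSpace 𝕜]

theorem HasStrictFDerivAt.exists_implicit_curve {f : 𝕜 × 𝕜 → 𝕜} {f' : 𝕜 × 𝕜 →L[𝕜] 𝕜}
    {u : 𝕜 × 𝕜} (hf : HasStrictFDerivAt f f' u) (h₂ : f' (0, 1) ≠ 0) :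
    ∃ ψ : 𝕜 → 𝕜, ψ u.1 = u.2 ∧ HasDerivAt ψ (-f' (1, 0) / f' (0, 1)) u.1 ∧
      ∀ᶠ x in 𝓝 u.1, f (x, ψ x) = f u := by
  have hinr : f' ∘L .inr 𝕜 𝕜 𝕜 =
      (ContinuousLinearEquiv.unitsEquivAut 𝕜 (Units.mk0 _ h₂) : 𝕜 →L[𝕜] 𝕜) :=
    ContinuousLinearMap.ext_ring (by simp)
  have hinv : (f' ∘L .inr 𝕜 𝕜 𝕜).IsInvertible := hinr ▸ ⟨_, rfl⟩
  refine ⟨hf.implicitFunctionOfProdDomain hinv, ?_, ?_,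
    hf.eventually_apply_implicitFunctionOfProdDomain hinv⟩
  · exact (hf.eventually_apply_eq_iff_implicitFunctionOfProdDomain hinv).self_of_nhds.1 rfl
  · have hψ := (hf.hasStrictFDerivAt_implicitFunctionOfProdDomain hinv).hasFDerivAt.hasDerivAt
    have hval : (f' ∘L .inr 𝕜 𝕜 𝕜).inverse (f' (1, 0)) = f' (1, 0) / f' (0, 1) := by
      rw [hinr, ContinuousLinearMap.inverse_equiv]
      simp [div_eq_mul_inv]
    simpa [hval, neg_div] using hψ

end ImplicitCurve

section CoordinatePlane

variable {𝕜 ι : Type*} [NontriviallyNormedField 𝕜] [Fintype ι] [DecidableEq ι]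

theorem hasStrictFDerivAt_update_update (z : ι → 𝕜) {j d : ι} (hjd : j ≠ d) (p : 𝕜 × 𝕜) :
    HasStrictFDerivAt (fun q : 𝕜 × 𝕜 => update (update z j q.1) d q.2)
      ((ContinuousLinearMap.fst 𝕜 𝕜 𝕜).smulRight (Pi.single j 1 : ι → 𝕜) +
        (ContinuousLinearMap.snd 𝕜 𝕜 𝕜).smulRight (Pi.single d 1 : ι → 𝕜)) p := by
  refine ((ContinuousLinearMap.hasStrictFDerivAt _).const_add
    (update (update z j 0) d 0)).congr_of_eventuallyEq (.of_forall fun q => ?_)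
  ext k
  rcases eq_or_ne k d with rfl | hkd
  · simp [hjd.symm]
  rcases eq_or_ne k j with rfl | hkj
  · simp [hkd]
  · simp [hkd, hkj]

theorem HasStrictFDerivAt.exists_update_update_curve [CompleteSpace 𝕜] {H : (ι → 𝕜) → 𝕜}
    {H' : (ι → 𝕜) →L[𝕜] 𝕜} {z : ι → 𝕜}
    (hH : HasStrictFDerivAt H H' z) {j d : ι} (hjd : j ≠ d) (hd : H' (Pi.single d 1) ≠ 0) :
    ∃ ψ : 𝕜 → 𝕜, ψ (z j) = z d ∧ HasDerivAt ψ (-H' (Pi.single j 1) / H' (Pi.single d 1)) (z j) ∧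
      ∀ᶠ x in 𝓝 (z j), H (update (update z j x) d (ψ x)) = H z := by
  have hz : update (update z j (z j)) d (z d) = z := by simp
  have hslice := (hz ▸ hH).comp (z j, z d) (hasStrictFDerivAt_update_update z hjd (z j, z d))
  simpa [hz, hjd.symm] using hslice.exists_implicit_curve (by simpa [hjd.symm] using hd)

end CoordinatePlane

theorem re_conj_mul_deriv_nonneg_of_isLocalMinOn {ψ : ℂ → ℂ} {a c : ℂ} (hψ : HasDerivAt ψ c a)
    (hmin : IsLocalMinOn (‖ψ ·‖) (closedBall 0 ‖a‖) a) {s : ℂ} (hs : s.re < 0) :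
    0 ≤ (conj (ψ a) * c * a * s).re := by
  have hmin_sq : IsLocalMinOn (‖ψ ·‖ ^ 2) (closedBall 0 ‖a‖) a :=
    hmin.mono fun x hx => pow_le_pow_left₀ (norm_nonneg _) hx 2
  have hcone : a * s ∈ posTangentConeAt (closedBall 0 ‖a‖) a := by
    refine mem_posTangentConeAt_of_frequently_mem
      ((Complex.eventually_norm_one_add_mul_le_one hs).mono fun t ht => ?_).frequently
    have : a + t • (a * s) = a * (1 + t * s) := by rw [Complex.real_smul]; ring
    rw [mem_closedBall_zero_iff, this, norm_mul]
    exact mul_le_of_le_one_right (norm_nonneg a) ht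
  have hfermat := hmin_sq.hasFDerivWithinAt_nonneg
    ((hψ.hasFDerivAt.restrictScalars ℝ).norm_sq.hasFDerivWithinAt) hcone
  rw [show conj (ψ a) * c * a * s = a * s * c * conj (ψ a) by ring]
  simpa [Complex.inner, ← mul_add] using hfermat

def IsLocallyMinimalZero {ι : Type*} (H : (ι → ℂ) → ℂ) (z : ι → ℂ) : Prop :=
  ∃ U ∈ 𝓝 z, ∀ w ∈ U, H w = 0 → (∀ j, ‖w j‖ ≤ ‖z j‖) → ∀ j, ‖w j‖ = ‖z j‖

theorem IsLocallyMinimalZero.isLocalMinOn_norm {ι : Type*} [DecidableEq ι]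
    {H : (ι → ℂ) → ℂ} {z : ι → ℂ} (hmin : IsLocallyMinimalZero H z) {j d : ι} (hjd : j ≠ d)
    {ψ : ℂ → ℂ} (hψz : ψ (z j) = z d) (hψ : ContinuousAt ψ (z j))
    (hzero : ∀ᶠ x in 𝓝 (z j), H (update (update z j x) d (ψ x)) = 0) :
    IsLocalMinOn (‖ψ ·‖) (closedBall 0 ‖z j‖) (z j) := by
  obtain ⟨U, hU, hUmin⟩ := hmin
  have hw : Tendsto (fun x => update (update z j x) d (ψ x)) (𝓝 (z j)) (𝓝 z) := by
    have hψ' : Tendsto ψ (𝓝 (z j)) (𝓝 (z d)) := hψz ▸ hψ.tendsto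
    have h₁ : Tendsto (update z j) (𝓝 (z j)) (𝓝 (update z j (z j))) :=
      tendsto_const_nhds.update j tendsto_id
    simpa using h₁.update d hψ'
  filter_upwards [nhdsWithin_le_nhds (hw.eventually hU), nhdsWithin_le_nhds hzero,
    self_mem_nhdsWithin] with x hxU hx0 hx
  rw [mem_closedBall_zero_iff] at hx
  rw [hψz]
  by_contra! hlt
  have hle : ∀ k, ‖update (update z j x) d (ψ x) k‖ ≤ ‖z k‖ := by
    intro k
    rcases eq_or_ne k d with rfl | hkd
    · simpa using hlt.le
    rcases eq_or_ne k j with rfl | hkj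
    · simpa [hkd] using hx
    · simp [hkd, hkj]
  exact hlt.ne (by simpa using hUmin _ hxU hx0 hle d)

/-- at a locally minimal simple pole, the quantities
z_j·H_j(z)/(z_d·H_d(z)) are nonnegative reals (Lemma 2.1 of Pemantle–Wilson,
"Asymptotics of multivariate sequences I"). Here the number of variables is d = n+1
and the last coordinate plays the role of the d-th. -/
theorem statement4
    (n : ℕ) (H : (Fin (n + 1) → ℂ) → ℂ) (z : Fin (n + 1) → ℂ)
    (hH : AnalyticAt ℂ H z) (hz0 : H z = 0)
    (hlast : z (Fin.last n) * pdj H z (Fin.last n) ≠ 0)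
    -- z is a locally minimal point of the zero set of H
    (hmin : ∃ U ∈ 𝓝 z, ∀ w ∈ U, H w = 0 →
      (∀ j, ‖w j‖ ≤ ‖z j‖) →
      (∀ j, ‖w j‖ = ‖z j‖)) :
    ∀ j : Fin n, ∃ t : ℝ, 0 ≤ t ∧
      z j.castSucc * pdj H z j.castSucc / (z (Fin.last n) * pdj H z (Fin.last n)) = (t : ℂ) := by
  intro j
  set k := j.castSucc
  set d := Fin.last n
  have hkd : k ≠ d := (Fin.castSucc_lt_last j).ne
  have hzd : z d ≠ 0 := left_ne_zero_of_mul hlast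
  obtain ⟨ψ, hψz, hψ, hzero⟩ : ∃ ψ : ℂ → ℂ, ψ (z k) = z d ∧
      HasDerivAt ψ (-pdj H z k / pdj H z d) (z k) ∧
      ∀ᶠ x in 𝓝 (z k), H (update (update z k x) d (ψ x)) = H z :=
    hH.hasStrictFDerivAt.exists_update_update_curve hkd (right_ne_zero_of_mul hlast)
  have hloc := IsLocallyMinimalZero.isLocalMinOn_norm hmin hkd hψz hψ.continuousAt
    (by simpa [hz0] using hzero)
  set r := z k * pdj H z k / (z d * pdj H z d) with hr_def
  have hre_mul : ∀ s : ℂ, s.re < 0 → (r * s).re ≤ 0 := fun s hs => by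
    have h := re_conj_mul_deriv_nonneg_of_isLocalMinOn hψ hloc hs
    rw [hψz, show conj (z d) * (-pdj H z k / pdj H z d) * z k * s =
      -(Complex.normSq (z d) * (r * s)) by rw [hr_def, ← Complex.mul_conj]; field_simp,
      Complex.neg_re, Complex.re_ofReal_mul] at h
    nlinarith [Complex.normSq_pos.2 hzd]
  have hr : 0 ≤ r := Complex.nonneg_of_forall_re_mul_nonpos hre_mul
  exact ⟨r.re, (Complex.nonneg_iff.1 hr).1, Complex.eq_re_of_ofReal_le hr⟩
end

section
/- Let H be analytic on a neighborhood of the closed polydisk D(z) ⊆ ℂ^d, suppose all coordinates of z are nonzero, H(z) = 0, H_d(z) ≠ 0, and z is the only zero of H in D(z) (strict minimality). Let g parametrize the zero set of H near z, let r ∈ ℝ^d with r_d ≠ 0, and form f̃ with this r. Then: (i) f̃(0) = 0; (ii) if r ∈ dir(z), then ∂f̃/∂θ_j (0) = 0 for every j = 1,…,d−1; and (iii) Re f̃(θ) > 0 for every θ ≠ 0 in the neighborhood of 0 on which f̃ is defined with each θ_j ∈ (−π, π). -/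
open Filter Topology

/-- The phase function
f̃(θ) = log( g(z₁e^{iθ₁},…,z_{d-1}e^{iθ_{d-1}})/z_d ) + i·Σ_j (r_j/r_d)·θ_j,
where near θ = 0 the branch of the logarithm equal to 0 at θ = 0 is the principal
branch (since g(ẑ)/z_d = 1). -/
noncomputable def phaseFun {n : ℕ} (g : (Fin n → ℂ) → ℂ) (z : Fin (n + 1) → ℂ)
    (r : Fin (n + 1) → ℝ) (θ : Fin n → ℝ) : ℂ :=
  Complex.log (g (fun j => z j.castSucc * Complex.exp (Complex.I * θ j)) / z (Fin.last n))
    + Complex.I * ∑ j, ((r j.castSucc : ℂ) / (r (Fin.last n) : ℂ)) * θ j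

/-!
(i) is `log 1 = 0`.

(ii) Differentiating `H(ŵ, g(ŵ)) = 0` gives `H_j(z) + ∂_j g(ẑ) H_d(z) = 0`, while the
`θ_j`-derivative of `f̃` at `0` is `i (z_j ∂_j g(ẑ) / z_d + r_j / r_d)`. For
`r = c (z_k H_k(z))_k` this is `i z_j (∂_j g(ẑ) H_d(z) + H_j(z)) / (z_d H_d(z)) = 0`.

(iii) The linear term of `f̃` is purely imaginary, so `Re f̃(θ) = log (|g(ŵ)| / |z_d|)` with
`ŵ = (z_j e^{iθ_j})_j`. If `|g(ŵ)| ≤ |z_d|`, then `(ŵ, g(ŵ))` is a zero of `H` in `D(z)`, hence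
equal to `z` by strict minimality, and `θ = 0` because each `θ_j ∈ (-π, π)`.
-/

theorem hasFDerivAt_snoc_graph {𝕜 F : Type*} [NontriviallyNormedField 𝕜]
    [NormedAddCommGroup F] [NormedSpace 𝕜 F] {n : ℕ} {g : (Fin n → F) → F}
    {G : (Fin n → F) →L[𝕜] F} {w : Fin n → F} (hg : HasFDerivAt g G w) :
    HasFDerivAt (fun v => (Fin.snoc v (g v) : Fin (n + 1) → F))
      (ContinuousLinearMap.pi (Fin.lastCases G ContinuousLinearMap.proj)) w := by
  refine hasFDerivAt_pi'.2 fun i => ?_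
  rw [ContinuousLinearMap.proj_pi]
  induction i using Fin.lastCases with
  | last => simpa only [Fin.snoc_last, Fin.lastCases_last] using hg
  | cast j =>
    simpa only [Fin.snoc_castSucc, Fin.lastCases_castSucc] using hasFDerivAt_apply j w

theorem pdj_castSucc_add_fderiv_mul_pdj_last_eq_zero {n : ℕ} {H : (Fin (n + 1) → ℂ) → ℂ}
    {g : (Fin n → ℂ) → ℂ} {w : Fin n → ℂ}
    (hH : DifferentiableAt ℂ H (Fin.snoc w (g w))) (hg : DifferentiableAt ℂ g w)
    (hzero : ∀ᶠ v in 𝓝 w, H (Fin.snoc v (g v)) = 0) (j : Fin n) :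
    pdj H (Fin.snoc w (g w)) j.castSucc
      + fderiv ℂ g w (Pi.single j 1) * pdj H (Fin.snoc w (g w)) (Fin.last n) = 0 := by
  have hcomp := hH.hasFDerivAt.comp w (hasFDerivAt_snoc_graph hg.hasFDerivAt)
  have hvanish := hcomp.unique ((hasFDerivAt_const (0 : ℂ) w).congr_of_eventuallyEq hzero)
  have hdir : (ContinuousLinearMap.pi (Fin.lastCases (fderiv ℂ g w) ContinuousLinearMap.proj))
      (Pi.single j 1) = (Pi.single j.castSucc 1 : Fin (n + 1) → ℂ)
        + fderiv ℂ g w (Pi.single j 1) • Pi.single (Fin.last n) 1 := by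
    ext i
    induction i using Fin.lastCases with
    | last => simp [(Fin.castSucc_lt_last j).ne']
    | cast k => simp [Pi.single_apply, (Fin.castSucc_lt_last k).ne]
  have := congr($hvanish (Pi.single j 1))
  rw [ContinuousLinearMap.comp_apply, hdir, map_add, map_smul] at this
  simpa [pdj] using this

theorem eq_zero_of_exp_mul_I_eq_one {θ : ℝ} (hθ : θ ∈ Set.Ioo (-Real.pi) Real.pi)
    (h : Complex.exp (θ * Complex.I) = 1) : θ = 0 := by
  have harg := Complex.arg_exp_mul_I θ
  rwa [h, Complex.arg_one, toIocMod_eq_self _ |>.mpr ⟨hθ.1, by linarith [hθ.2]⟩, eq_comm] at harg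

theorem ContinuousLinearMap.apply_eq_sum_mul_single {ι R : Type*} [Fintype ι] [DecidableEq ι]
    [Semiring R] [TopologicalSpace R] (f : (ι → R) →L[R] R) (a : ι → R) :
    f a = ∑ i, a i * f (Pi.single i 1) := by
  conv_lhs => rw [← Finset.univ_sum_single a, map_sum]
  refine Finset.sum_congr rfl fun i _ => ?_
  rw [← smul_eq_mul, ← map_smul, ← Pi.single_smul', smul_eq_mul, mul_one]

section Torus

open Complex

variable {ι : Type*}

noncomputable def torusPoint (ζ : ι → ℂ) (θ : ι → ℝ) : ι → ℂ :=
  fun j => ζ j * exp (I * θ j)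

@[simp]
theorem torusPoint_zero (ζ : ι → ℂ) : torusPoint ζ 0 = ζ := by
  ext j; simp [torusPoint]

@[simp]
theorem norm_torusPoint (ζ : ι → ℂ) (θ : ι → ℝ) (j : ι) : ‖torusPoint ζ θ j‖ = ‖ζ j‖ := by
  simp [torusPoint, norm_exp]

theorem torusPoint_ne_self {ζ : ι → ℂ} (hζ : ∀ j, ζ j ≠ 0) {θ : ι → ℝ} (hθ : θ ≠ 0)
    (hθπ : ∀ j, θ j ∈ Set.Ioo (-Real.pi) Real.pi) : torusPoint ζ θ ≠ ζ := by
  refine fun h => hθ (funext fun j => eq_zero_of_exp_mul_I_eq_one (hθπ j) ?_)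
  have hj : ζ j * exp (I * θ j) = ζ j * 1 := by rw [mul_one]; exact congrFun h j
  rw [mul_comm (θ j : ℂ)]
  exact mul_left_cancel₀ (hζ j) hj

theorem hasFDerivAt_torusPoint [Fintype ι] (ζ : ι → ℂ) :
    HasFDerivAt (torusPoint ζ)
      (ContinuousLinearMap.pi fun j => (ζ j * I) • ofRealCLM.comp (ContinuousLinearMap.proj j))
      0 := by
  refine hasFDerivAt_pi'.2 fun j => ?_
  rw [ContinuousLinearMap.proj_pi]
  have hexp : HasDerivAt (fun t : ℂ => ζ j * exp (I * t)) (ζ j * I) 0 := by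
    simpa using (((hasDerivAt_id (0 : ℂ)).const_mul I).cexp).const_mul (ζ j)
  exact hexp.comp_hasFDerivAt (f := fun θ : ι → ℝ => (θ j : ℂ)) 0
    (ofRealCLM.comp (ContinuousLinearMap.proj (R := ℝ) (φ := fun _ : ι => ℝ) j)).hasFDerivAt

end Torus

section PhaseFunction

open Complex

variable {n : ℕ} {g : (Fin n → ℂ) → ℂ} {z : Fin (n + 1) → ℂ}

theorem phaseFun_eq (r : Fin (n + 1) → ℝ) :
    phaseFun g z r = fun θ => log (g (torusPoint (Fin.init z) θ) / z (Fin.last n))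
      + I * ∑ j, ((r j.castSucc : ℂ) / (r (Fin.last n) : ℂ)) * θ j := rfl

theorem phaseFun_zero (r : Fin (n + 1) → ℝ) (hgval : g (Fin.init z) = z (Fin.last n))
    (hzd : z (Fin.last n) ≠ 0) : phaseFun g z r 0 = 0 := by
  simp [phaseFun_eq, hgval, hzd]

theorem re_phaseFun (r : Fin (n + 1) → ℝ) (θ : Fin n → ℝ) :
    (phaseFun g z r θ).re
      = Real.log (‖g (torusPoint (Fin.init z) θ)‖ / ‖z (Fin.last n)‖) := by
  have hlin : I * ∑ j, ((r j.castSucc : ℂ) / (r (Fin.last n) : ℂ)) * θ j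
      = ((∑ j, r j.castSucc / r (Fin.last n) * θ j : ℝ) : ℂ) * I := by
    push_cast; ring
  rw [phaseFun_eq, add_re, hlin, mul_I_re, ofReal_im, neg_zero, add_zero, log_re, norm_div]

theorem hasFDerivAt_phaseFun_zero (r : Fin (n + 1) → ℝ) {G : (Fin n → ℂ) →L[ℂ] ℂ}
    (hg : HasFDerivAt g G (Fin.init z)) (hgval : g (Fin.init z) = z (Fin.last n))
    (hzd : z (Fin.last n) ≠ 0) :
    HasFDerivAt (phaseFun g z r)
      (∑ j, (I * (z j.castSucc * G (Pi.single j 1) / z (Fin.last n)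
          + r j.castSucc / r (Fin.last n))) • ofRealCLM.comp (ContinuousLinearMap.proj j)) 0 := by
  have hlog : HasDerivAt (fun t => log (t / z (Fin.last n))) (z (Fin.last n))⁻¹
      (g (torusPoint (Fin.init z) 0)) := by
    rw [torusPoint_zero, hgval]
    have h := ((hasDerivAt_id (z (Fin.last n))).div_const (z (Fin.last n))).clog
      (by simp [hzd, one_mem_slitPlane])
    simpa [hzd] using h
  have hg' : HasFDerivAt (fun θ => g (torusPoint (Fin.init z) θ))
      ((G.restrictScalars ℝ).comp (ContinuousLinearMap.pi fun j =>
        (z j.castSucc * I) • ofRealCLM.comp (ContinuousLinearMap.proj j))) 0 :=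
    ((torusPoint_zero (Fin.init z)).symm ▸ hg.restrictScalars ℝ).comp 0 (hasFDerivAt_torusPoint _)
  have hL := (HasFDerivAt.fun_sum (u := Finset.univ)
    (A := fun j (θ : Fin n → ℝ) => ((r j.castSucc : ℂ) / (r (Fin.last n) : ℂ)) * θ j)
    fun j _ => (ofRealCLM.comp (ContinuousLinearMap.proj (R := ℝ) (φ := fun _ : Fin n => ℝ) j)
      ).hasFDerivAt.const_mul ((r j.castSucc : ℂ) / (r (Fin.last n) : ℂ)) (x := 0)).const_mul I
  rw [phaseFun_eq]
  refine ((hlog.comp_hasFDerivAt 0 hg').add hL).congr_fderiv ?_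
  ext v
  simp only [add_apply, smul_apply, ContinuousLinearMap.comp_apply, ContinuousLinearMap.coe_pi',
    ContinuousLinearMap.proj_apply, ofRealCLM_apply, smul_eq_mul,
    ContinuousLinearMap.coe_restrictScalars', sum_apply]
  rw [G.apply_eq_sum_mul_single, Finset.mul_sum, Finset.mul_sum, ← Finset.sum_add_distrib]
  refine Finset.sum_congr rfl fun j _ => ?_
  field_simp

end PhaseFunction

def IsStrictlyMinimalZero {m : ℕ} (H : (Fin m → ℂ) → ℂ) (z : Fin m → ℂ) : Prop :=
  ∀ w : Fin m → ℂ, (∀ j, ‖w j‖ ≤ ‖z j‖) → H w = 0 → w = z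

theorem IsStrictlyMinimalZero.norm_last_lt {n : ℕ} {H : (Fin (n + 1) → ℂ) → ℂ}
    {z : Fin (n + 1) → ℂ} (hmin : IsStrictlyMinimalZero H z) {w : Fin n → ℂ} {x : ℂ}
    (hw : ∀ j, ‖w j‖ ≤ ‖z j.castSucc‖) (hne : w ≠ Fin.init z)
    (hx : H (Fin.snoc w x) = 0) : ‖z (Fin.last n)‖ < ‖x‖ := by
  by_contra! hle
  refine hne ?_
  have hsnoc : (Fin.snoc w x : Fin (n + 1) → ℂ) = z :=
    hmin _ (Fin.lastCases (by simpa using hle) fun j => by simpa using hw j) hx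
  rw [← hsnoc, Fin.init_snoc]

theorem statement5_general
    (n : ℕ) (H : (Fin (n + 1) → ℂ) → ℂ) (z : Fin (n + 1) → ℂ) (hz : ∀ j, z j ≠ 0)
    -- H is analytic on a neighborhood of the closed polydisk D(z)
    (hHanal : ∀ w : Fin (n + 1) → ℂ, (∀ j, ‖w j‖ ≤ ‖z j‖) →
      AnalyticAt ℂ H w)
    (hHd : pdj H z (Fin.last n) ≠ 0)
    -- strict minimality: z is the only zero of H in D(z)
    (hmin : ∀ w : Fin (n + 1) → ℂ, (∀ j, ‖w j‖ ≤ ‖z j‖) →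
      H w = 0 → w = z)
    -- g is the local parametrization of the zero set of H near z
    (g : (Fin n → ℂ) → ℂ)
    (hganal : AnalyticAt ℂ g (fun j => z j.castSucc))
    (hgval : g (fun j => z j.castSucc) = z (Fin.last n))
    (U : Set (Fin n → ℂ)) (hU : U ∈ 𝓝 (fun j => z j.castSucc))
    (hgzero : ∀ wh ∈ U, H (Fin.snoc wh (g wh)) = 0)
    (r : Fin (n + 1) → ℝ) :
    -- (i) f̃(0) = 0
    phaseFun g z r 0 = 0 ∧
    -- (ii) if r ∈ dir(z) then ∇f̃(0) = 0
    ((∃ c : ℂ, c ≠ 0 ∧ ∀ j, ((r j : ℝ) : ℂ) = c * z j * pdj H z j) →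
      HasFDerivAt (phaseFun g z r) (0 : (Fin n → ℝ) →L[ℝ] ℂ) 0) ∧
    -- (iii) Re f̃(θ) > 0 for θ ≠ 0 in the domain of definition with θ_j ∈ (−π, π)
    (∀ θ : Fin n → ℝ, θ ≠ 0 → (∀ j, θ j ∈ Set.Ioo (-Real.pi) Real.pi) →
      (fun j => z j.castSucc * Complex.exp (Complex.I * θ j)) ∈ U →
      0 < (phaseFun g z r θ).re) := by
  change g (Fin.init z) = z (Fin.last n) at hgval
  change AnalyticAt ℂ g (Fin.init z) at hganal
  change U ∈ 𝓝 (Fin.init z) at hU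
  have hzd := hz (Fin.last n)
  have hgraph : (Fin.snoc (Fin.init z) (g (Fin.init z)) : Fin (n + 1) → ℂ) = z := by
    rw [hgval]; exact Fin.snoc_init_self z
  refine ⟨phaseFun_zero r hgval hzd, ?_, ?_⟩
  · rintro ⟨c, hc, hr⟩
    have hHz : DifferentiableAt ℂ H (Fin.snoc (Fin.init z) (g (Fin.init z))) := by
      rw [hgraph]; exact (hHanal z fun _ => le_rfl).differentiableAt
    have himplicit := pdj_castSucc_add_fderiv_mul_pdj_last_eq_zero hHz hganal.differentiableAt
      (Filter.eventually_of_mem hU hgzero)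
    rw [hgraph] at himplicit
    refine (hasFDerivAt_phaseFun_zero r hganal.differentiableAt.hasFDerivAt hgval hzd).congr_fderiv
      (Finset.sum_eq_zero fun j _ => ?_)
    convert zero_smul ℂ (Complex.ofRealCLM.comp
      (ContinuousLinearMap.proj (R := ℝ) (φ := fun _ : Fin n => ℝ) j)) using 2
    rw [hr, hr]
    field_simp
    linear_combination Complex.I * z j.castSucc * himplicit j
  · intro θ hθ hθπ hθU
    have hlt := IsStrictlyMinimalZero.norm_last_lt hmin (by simp)
      (torusPoint_ne_self (fun j => hz _) hθ hθπ) (hgzero _ hθU)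
    rw [re_phaseFun]
    exact Real.log_pos ((one_lt_div (norm_pos_iff.2 hzd)).2 hlt)

/-- at a strictly minimal pole, the phase f̃ vanishes at 0, is stationary
at 0 when r ∈ dir(z), and has strictly positive real part away from 0 (Lemma 4.2 of
Pemantle–Wilson, "Asymptotics of multivariate sequences I"). The number of variables
is d = n+1. -/
theorem statement5
    (n : ℕ) (H : (Fin (n + 1) → ℂ) → ℂ) (z : Fin (n + 1) → ℂ) (hz : ∀ j, z j ≠ 0)
    -- H is analytic on a neighborhood of the closed polydisk D(z)
    (hHanal : ∀ w : Fin (n + 1) → ℂ, (∀ j, ‖w j‖ ≤ ‖z j‖) →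
      AnalyticAt ℂ H w)
    (hz0 : H z = 0) (hHd : pdj H z (Fin.last n) ≠ 0)
    -- strict minimality: z is the only zero of H in D(z)
    (hmin : ∀ w : Fin (n + 1) → ℂ, (∀ j, ‖w j‖ ≤ ‖z j‖) →
      H w = 0 → w = z)
    -- g is the local parametrization of the zero set of H near z
    (g : (Fin n → ℂ) → ℂ)
    (hganal : AnalyticAt ℂ g (fun j => z j.castSucc))
    (hgval : g (fun j => z j.castSucc) = z (Fin.last n))
    (U : Set (Fin n → ℂ)) (hU : U ∈ 𝓝 (fun j => z j.castSucc))
    (hgzero : ∀ wh ∈ U, H (Fin.snoc wh (g wh)) = 0)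
    -- r ∈ ℝ^d with r_d ≠ 0
    (r : Fin (n + 1) → ℝ) (hrd : r (Fin.last n) ≠ 0) :
    -- (i) f̃(0) = 0
    phaseFun g z r 0 = 0 ∧
    -- (ii) if r ∈ dir(z) then ∇f̃(0) = 0
    ((∃ c : ℂ, c ≠ 0 ∧ ∀ j, ((r j : ℝ) : ℂ) = c * z j * pdj H z j) →
      HasFDerivAt (phaseFun g z r) (0 : (Fin n → ℝ) →L[ℝ] ℂ) 0) ∧
    -- (iii) Re f̃(θ) > 0 for θ ≠ 0 in the domain of definition with θ_j ∈ (−π, π)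
    (∀ θ : Fin n → ℝ, θ ≠ 0 → (∀ j, θ j ∈ Set.Ioo (-Real.pi) Real.pi) →
      (fun j => z j.castSucc * Complex.exp (Complex.I * θ j)) ∈ U →
      0 < (phaseFun g z r θ).re) :=
  statement5_general n H z hz hHanal hHd hmin g hganal hgval U hU hgzero r
end

section
/- Let G, H : ℂ² → ℂ be entire with H(0,0) ≠ 0, let a_{r,s} be the power-series coefficients of F = G/H at the origin, and suppose every a_{r,s} is a nonnegative real number. Let u, v > 0 be such that Σ_{r,s} a_{r,s} u'^r v'^s converges for all 0 < u' < u and 0 < v' < v, while Σ_{r,s} a_{r,s} u^r v^s = ∞. Then S(u',v') := Σ_{r,s} a_{r,s} u'^r v'^s tends to +∞ as (u',v') → (u,v) with 0 < u' < u and 0 < v' < v, and H(u,v) = 0. -/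
/-!
The blow-up is monotone convergence: the terms are nonnegative and continuous, so every partial
sum at `(u, v)` is approached from inside the box, and the partial sums at `(u, v)` are unbounded.

For the pole, restrict to the complex line `t ↦ (t x, t y)` through a point `(x, y)` of the box.
Convergence on a slightly larger box makes `t ↦ S(t x, t y)` holomorphic on a disc of radius
`τ > 1`, where it agrees with `G / H` near `0`; the identity theorem gives `S · H = G` at `t = 1`.
If `H(u, v) ≠ 0`, then `S = G / H` would stay bounded near `(u, v)`, contradicting the blow-up.
-/

open Filter Topology Metric

theorem tendsto_tsum_atTop_of_not_summable {ι X : Type*} [TopologicalSpace X]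
    {f : ι → X → ℝ} {s : Set X} {x₀ : X} (hf : ∀ i, ContinuousAt (f i) x₀)
    (hf₀ : ∀ i, 0 ≤ f i x₀) (hfs : ∀ x ∈ s, ∀ i, 0 ≤ f i x)
    (hsum : ∀ x ∈ s, Summable fun i => f i x) (hdiv : ¬Summable fun i => f i x₀) :
    Tendsto (fun x => ∑' i, f i x) (𝓝[s] x₀) atTop := by
  refine tendsto_atTop.2 fun M => ?_
  obtain ⟨T, hT⟩ : ∃ T : Finset ι, M < ∑ i ∈ T, f i x₀ := by
    by_contra! h
    exact hdiv (summable_of_sum_le hf₀ h)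
  have hpartial : ∀ᶠ x in 𝓝 x₀, M < ∑ i ∈ T, f i x :=
    (tendsto_finsetSum T fun i _ => hf i).eventually (eventually_gt_nhds hT)
  filter_upwards [nhdsWithin_le_nhds hpartial, self_mem_nhdsWithin] with x hMx hx
  exact hMx.le.trans ((hsum x hx).sum_le_tsum T fun i _ => hfs x hx i)

theorem eq_zero_of_tendsto_atTop_of_mul_eq {X : Type*} {l : Filter X} [l.NeBot] {S : X → ℝ}
    {g h : X → ℂ} {g₀ h₀ : ℂ} (hS : Tendsto S l atTop) (hg : Tendsto g l (𝓝 g₀))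
    (hh : Tendsto h l (𝓝 h₀)) (hSgh : ∀ᶠ x in l, (S x : ℂ) * h x = g x) : h₀ = 0 := by
  by_contra hh₀
  have hS_div : Tendsto (fun x => (S x : ℂ)) l (𝓝 (g₀ / h₀)) := by
    refine (hg.div hh hh₀).congr' ?_
    filter_upwards [hSgh, hh.eventually_ne hh₀] with x hx hx₀
    rw [Pi.div_apply, ← hx, mul_div_cancel_right₀ _ hx₀]
  have hS_re := (Complex.continuous_re.tendsto _).comp hS_div
  simp only [Function.comp_def, Complex.ofReal_re] at hS_re
  exact not_tendsto_atTop_of_tendsto_nhds hS_re hS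

theorem exists_one_lt_mul_lt {x y u v : ℝ} (hx : x < u) (hy : y < v) :
    ∃ τ : ℝ, 1 < τ ∧ τ * x < u ∧ τ * y < v := by
  have hxτ : ∀ᶠ τ in 𝓝 (1 : ℝ), τ * x < u :=
    (tendsto_id.mul_const x).eventually_lt_const (by rwa [one_mul])
  have hyτ : ∀ᶠ τ in 𝓝 (1 : ℝ), τ * y < v :=
    (tendsto_id.mul_const y).eventually_lt_const (by rwa [one_mul])
  have hτ : ∀ᶠ τ in 𝓝[>] (1 : ℝ), 1 < τ := self_mem_nhdsWithin
  exact (hτ.and (nhdsWithin_le_nhds (hxτ.and hyτ))).exists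

section DoubleSeries

variable {a : ℕ → ℕ → ℝ}

theorem differentiableOn_tsum_mul_pow (ha : ∀ r s, 0 ≤ a r s) {z : ℂ × ℂ} {τ : ℝ}
    (hsum : Summable fun rs : ℕ × ℕ => a rs.1 rs.2 * (τ * ‖z.1‖) ^ rs.1 * (τ * ‖z.2‖) ^ rs.2) :
    DifferentiableOn ℂ
      (fun t : ℂ => ∑' rs : ℕ × ℕ, (a rs.1 rs.2 : ℂ) * (t * z.1) ^ rs.1 * (t * z.2) ^ rs.2)
      (ball 0 τ) := by
  refine Complex.differentiableOn_tsum_of_summable_norm hsum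
    (fun rs => (by fun_prop : Differentiable ℂ _).differentiableOn) isOpen_ball fun rs t ht => ?_
  have htτ : ‖t‖ ≤ τ := (mem_ball_zero_iff.mp ht).le
  simp only [norm_mul, norm_pow, Complex.norm_real, Real.norm_of_nonneg (ha _ _)]
  have := ha rs.1 rs.2
  have hτ : 0 ≤ τ := (norm_nonneg t).trans htτ
  gcongr

theorem tsum_mul_eq_of_summable_scaled_norm {G H : ℂ × ℂ → ℂ} (hG : Differentiable ℂ G)
    (hH : Differentiable ℂ H) (hH0 : H 0 ≠ 0) (ha : ∀ r s, 0 ≤ a r s)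
    (hexp : ∀ᶠ p : ℂ × ℂ in 𝓝 0,
      HasSum (fun rs : ℕ × ℕ => (a rs.1 rs.2 : ℂ) * p.1 ^ rs.1 * p.2 ^ rs.2) (G p / H p))
    {z : ℂ × ℂ} {τ : ℝ} (hτ : 1 < τ)
    (hsum : Summable fun rs : ℕ × ℕ => a rs.1 rs.2 * (τ * ‖z.1‖) ^ rs.1 * (τ * ‖z.2‖) ^ rs.2) :
    (∑' rs : ℕ × ℕ, (a rs.1 rs.2 : ℂ) * z.1 ^ rs.1 * z.2 ^ rs.2) * H z = G z := by
  set L : ℂ → ℂ × ℂ := fun t => (t * z.1, t * z.2)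
  have hL : Differentiable ℂ L := by fun_prop
  have hL0 : Tendsto L (𝓝 0) (𝓝 0) := by simpa [L, Prod.mk_zero_zero] using hL.continuous.tendsto 0
  have hSH : AnalyticOnNhd ℂ
      (fun t => (∑' rs : ℕ × ℕ, (a rs.1 rs.2 : ℂ) * (L t).1 ^ rs.1 * (L t).2 ^ rs.2) * H (L t))
      (ball 0 τ) :=
    ((differentiableOn_tsum_mul_pow ha hsum).mul (hH.comp hL).differentiableOn).analyticOnNhd
      isOpen_ball
  have hG' : AnalyticOnNhd ℂ (fun t => G (L t)) (ball 0 τ) :=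
    (hG.comp hL).differentiableOn.analyticOnNhd isOpen_ball
  have hnear0 : (fun t => (∑' rs : ℕ × ℕ, (a rs.1 rs.2 : ℂ) * (L t).1 ^ rs.1 * (L t).2 ^ rs.2)
      * H (L t)) =ᶠ[𝓝 0] fun t => G (L t) := by
    filter_upwards [hL0.eventually (hexp.and (hH.continuous.continuousAt.eventually_ne hH0))]
      with t ⟨hsum_t, hH_t⟩
    rw [hsum_t.tsum_eq, div_mul_cancel₀ _ hH_t]
  have h1 : (1 : ℂ) ∈ ball 0 τ := mem_ball_zero_iff.2 (by simpa using hτ)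
  simpa [L] using hSH.eqOn_of_preconnected_of_eventuallyEq hG'
    (convex_ball 0 τ).isPreconnected (mem_ball_self (by linarith)) hnear0 h1

theorem ofReal_tsum_mul_eq_of_mem_box {G H : ℂ × ℂ → ℂ} (hG : Differentiable ℂ G)
    (hH : Differentiable ℂ H) (hH0 : H 0 ≠ 0) (ha : ∀ r s, 0 ≤ a r s)
    (hexp : ∀ᶠ p : ℂ × ℂ in 𝓝 0,
      HasSum (fun rs : ℕ × ℕ => (a rs.1 rs.2 : ℂ) * p.1 ^ rs.1 * p.2 ^ rs.2) (G p / H p))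
    {u v : ℝ} (hconv : ∀ u' v' : ℝ, 0 < u' → u' < u → 0 < v' → v' < v →
      Summable fun rs : ℕ × ℕ => a rs.1 rs.2 * u' ^ rs.1 * v' ^ rs.2)
    {x y : ℝ} (hx : 0 < x) (hxu : x < u) (hy : 0 < y) (hyv : y < v) :
    ((∑' rs : ℕ × ℕ, a rs.1 rs.2 * x ^ rs.1 * y ^ rs.2 : ℝ) : ℂ) * H (x, y) = G (x, y) := by
  obtain ⟨τ, hτ, hτx, hτy⟩ := exists_one_lt_mul_lt hxu hyv
  have hsum := hconv _ _ (by positivity) hτx (by positivity) hτy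
  push_cast [Complex.ofReal_tsum]
  exact tsum_mul_eq_of_summable_scaled_norm (z := ((x : ℂ), (y : ℂ))) hG hH hH0 ha hexp hτ
    (by simpa [abs_of_pos hx, abs_of_pos hy] using hsum)

end DoubleSeries

/-- for a quotient of entire functions with nonnegative power-series
coefficients, the sum blows up at a boundary point of the domain of convergence,
which must be a zero of the denominator (part of the proof of Theorem 6.3 of
Pemantle–Wilson, "Asymptotics of multivariate sequences I"). -/
theorem statement13
    (G H : ℂ × ℂ → ℂ) (hG : Differentiable ℂ G) (hH : Differentiable ℂ H)
    (hH0 : H 0 ≠ 0)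
    (a : ℕ → ℕ → ℝ) (ha : ∀ r s, 0 ≤ a r s)
    (hexp : ∀ᶠ p : ℂ × ℂ in 𝓝 0,
      HasSum (fun rs : ℕ × ℕ => (a rs.1 rs.2 : ℂ) * p.1 ^ rs.1 * p.2 ^ rs.2) (G p / H p))
    (u v : ℝ) (hu : 0 < u) (hv : 0 < v)
    -- the series converges at all (u',v') with 0 < u' < u and 0 < v' < v
    (hconv : ∀ u' v' : ℝ, 0 < u' → u' < u → 0 < v' → v' < v →
      Summable fun rs : ℕ × ℕ => a rs.1 rs.2 * u' ^ rs.1 * v' ^ rs.2)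
    -- while the series diverges at (u,v)
    (hdiv : ¬ Summable fun rs : ℕ × ℕ => a rs.1 rs.2 * u ^ rs.1 * v ^ rs.2) :
    Tendsto (fun p : ℝ × ℝ => ∑' rs : ℕ × ℕ, a rs.1 rs.2 * p.1 ^ rs.1 * p.2 ^ rs.2)
      (𝓝[Set.Ioo 0 u ×ˢ Set.Ioo 0 v] (u, v)) atTop ∧
    H ((u : ℂ), (v : ℂ)) = 0 := by
  set Ω := Set.Ioo 0 u ×ˢ Set.Ioo 0 v
  have hblowup : Tendsto (fun p : ℝ × ℝ => ∑' rs : ℕ × ℕ, a rs.1 rs.2 * p.1 ^ rs.1 * p.2 ^ rs.2)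
      (𝓝[Ω] (u, v)) atTop :=
    tendsto_tsum_atTop_of_not_summable (fun _ => by fun_prop)
      (fun rs => by have := ha rs.1 rs.2; positivity)
      (fun p hp rs => by have := ha rs.1 rs.2; have := hp.1.1; have := hp.2.1; positivity)
      (fun p hp => hconv _ _ hp.1.1 hp.1.2 hp.2.1 hp.2.2) hdiv
  have hmul : ∀ p ∈ Ω, ((∑' rs : ℕ × ℕ, a rs.1 rs.2 * p.1 ^ rs.1 * p.2 ^ rs.2 : ℝ) : ℂ) *
      H (p.1, p.2) = G (p.1, p.2) := fun p hp =>
    ofReal_tsum_mul_eq_of_mem_box hG hH hH0 ha hexp hconv hp.1.1 hp.1.2 hp.2.1 hp.2.2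
  have : (𝓝[Ω] (u, v)).NeBot := by
    rw [← mem_closure_iff_nhdsWithin_neBot, closure_prod_eq, closure_Ioo hu.ne, closure_Ioo hv.ne]
    exact ⟨⟨hu.le, le_rfl⟩, ⟨hv.le, le_rfl⟩⟩
  have hcast : Tendsto (fun p : ℝ × ℝ => ((p.1 : ℂ), (p.2 : ℂ))) (𝓝[Ω] (u, v)) (𝓝 (u, v)) :=
    ((by fun_prop : Continuous fun p : ℝ × ℝ => ((p.1 : ℂ), (p.2 : ℂ))).tendsto (u, v)).mono_left
      nhdsWithin_le_nhds
  exact ⟨hblowup, eq_zero_of_tendsto_atTop_of_mul_eq hblowup ((hG.continuous.tendsto _).comp hcast)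
    ((hH.continuous.tendsto _).comp hcast) (eventually_nhdsWithin_of_forall hmul)⟩
end

section
/- The central Delannoy numbers satisfy D(n,n)·(√2 − 1)^{2n}·√n → 2^{−1/4} / ( (2−√2)·√(2π) ) as n → ∞; equivalently, D(n,n) is asymptotic to (3+2√2)^n · n^{−1/2} · 2^{−1/4}/((2−√2)√(2π)). -/
open Filter Topology

/-- The Delannoy numbers: D(0,0) = 1, with D(r,s) = D(r−1,s) + D(r,s−1) + D(r−1,s−1)
and D(r,s) = 0 when r < 0 or s < 0. -/
def delannoy : ℕ → ℕ → ℕ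
  | 0, 0 => 1
  | 0, s + 1 => delannoy 0 s
  | r + 1, 0 => delannoy r 0
  | r + 1, s + 1 => delannoy r (s + 1) + delannoy (r + 1) s + delannoy r s

/-!
By the closed form `D(r,s) = ∑ₖ C(r,k) C(s,k) 2ᵏ`, the central number `D(n,n) = ∑ₖ (C(n,k) √2ᵏ)²`
is, by Parseval, the mean over the circle of `|1 + √2 e^{iθ}|^{2n} = (3 + 2√2 cos θ)ⁿ`.
Dividing by `(3 + 2√2)ⁿ = (1 + √2)^{2n}` leaves `(1 - c (1 - cos θ))ⁿ` with `c = 2√2/(1 + √2)²`,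
which concentrates at `θ = 0`: substituting `θ = t/√n` and applying dominated convergence turns
`√n` times its integral into the Gaussian integral `∫ exp(-c t²/2) dt = √(2π/c)`.
-/

open Finset Real MeasureTheory

-- The correction term vanishes once `r < M`, which gives the Delannoy recurrence for the sums.
theorem sum_range_choose_succ_mul_choose_succ (r s M : ℕ) :
    ∑ k ∈ range (M + 1), (r + 1).choose k * (s + 1).choose k * 2 ^ k
        + r.choose M * s.choose M * 2 ^ (M + 1)
      = ∑ k ∈ range (M + 1),
          (r.choose k * (s + 1).choose k * 2 ^ k + (r + 1).choose k * s.choose k * 2 ^ k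
            + r.choose k * s.choose k * 2 ^ k) := by
  induction M with
  | zero => simp
  | succ M ih =>
    rw [sum_range_succ, sum_range_succ _ (M + 1), ← ih]
    simp only [Nat.choose_succ_succ, pow_succ]
    ring

theorem delannoy_eq_sum_range {r s N : ℕ} (h : r < N) :
    delannoy r s = ∑ k ∈ range N, r.choose k * s.choose k * 2 ^ k := by
  obtain ⟨M, rfl⟩ : ∃ M, N = M + 1 := ⟨N - 1, by omega⟩
  induction r, s using delannoy.induct generalizing M with
  | case1 => simp [delannoy, sum_range_succ']
  | case2 s ih => simp [delannoy, ih M h, sum_range_succ']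
  | case3 r ih => simp [delannoy, ih M (by omega), sum_range_succ']
  | case4 r s ih₁ ih₂ ih₃ =>
    have hM := sum_range_choose_succ_mul_choose_succ r s M
    rw [Nat.choose_eq_zero_of_lt (by omega : r < M), zero_mul, zero_mul, add_zero] at hM
    rw [delannoy, ih₁ M (by omega), ih₂ M h, ih₃ M (by omega), hM, sum_add_distrib,
      sum_add_distrib]

theorem delannoy_self (n : ℕ) :
    delannoy n n = ∑ k ∈ range (n + 1), n.choose k ^ 2 * 2 ^ k := by
  simp only [delannoy_eq_sum_range (Nat.lt_succ_self n), sq]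

theorem integral_exp_int_mul_mul_I (m : ℤ) :
    ∫ θ in -π..π, Complex.exp (m * θ * Complex.I) = if m = 0 then (2 * π : ℂ) else 0 := by
  split_ifs with hm
  · simp [hm, two_mul]
  · have hc : (m * Complex.I : ℂ) ≠ 0 := by simp [hm]
    have hper : Complex.exp (m * Complex.I * π) = Complex.exp (m * Complex.I * (-π : ℝ)) := by
      rw [← mul_one (Complex.exp (_ * (-π : ℝ))), ← Complex.exp_int_mul_two_pi_mul_I m,
        ← Complex.exp_add]
      push_cast
      ring_nf
    simp_rw [mul_right_comm _ _ Complex.I]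
    rw [integral_exp_mul_complex hc, hper, sub_self, zero_div]

theorem integral_norm_sq_sum_exp (s : Finset ℕ) (a : ℕ → ℂ) :
    ∫ θ in -π..π, ‖∑ k ∈ s, a k * Complex.exp (k * θ * Complex.I)‖ ^ 2
      = 2 * π * ∑ k ∈ s, ‖a k‖ ^ 2 := by
  have hexpand : ∀ θ : ℝ, ((‖∑ k ∈ s, a k * Complex.exp (k * θ * Complex.I)‖ ^ 2 : ℝ) : ℂ)
      = ∑ k ∈ s, ∑ l ∈ s,
          a k * (starRingEnd ℂ) (a l) * Complex.exp (((k : ℤ) - l : ℤ) * θ * Complex.I) := by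
    intro θ
    rw [Complex.ofReal_pow, ← Complex.mul_conj', map_sum, sum_mul_sum]
    refine sum_congr rfl fun k _ => sum_congr rfl fun l _ => ?_
    rw [map_mul, ← Complex.exp_conj, mul_mul_mul_comm, ← Complex.exp_add]
    congr 2
    simp only [map_mul, map_natCast, Complex.conj_ofReal, Complex.conj_I, mul_neg, Int.cast_sub,
      Int.cast_natCast]
    ring
  apply Complex.ofReal_injective
  rw [← intervalIntegral.integral_ofReal]
  simp_rw [hexpand]
  rw [intervalIntegral.integral_finsetSum fun k _ =>
    Continuous.intervalIntegrable (by fun_prop) _ _, Complex.ofReal_mul, Complex.ofReal_sum,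
    mul_sum]
  refine sum_congr rfl fun k hk => ?_
  rw [intervalIntegral.integral_finsetSum fun l _ =>
    Continuous.intervalIntegrable (by fun_prop) _ _]
  simp_rw [intervalIntegral.integral_const_mul, integral_exp_int_mul_mul_I, sub_eq_zero,
    Nat.cast_inj, mul_ite, mul_zero, sum_ite_eq, if_pos hk, Complex.mul_conj']
  push_cast
  ring

theorem norm_one_add_mul_exp_sq (r θ : ℝ) :
    ‖1 + r * Complex.exp (θ * Complex.I)‖ ^ 2 = 1 + r ^ 2 + 2 * r * cos θ := by
  rw [Complex.sq_norm, Complex.normSq_apply]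
  simp only [Complex.add_re, Complex.add_im, Complex.mul_re, Complex.mul_im, Complex.one_re,
    Complex.one_im, Complex.ofReal_re, Complex.ofReal_im, Complex.exp_ofReal_mul_I_re,
    Complex.exp_ofReal_mul_I_im]
  linear_combination r ^ 2 * sin_sq_add_cos_sq θ

theorem integral_one_add_sq_add_mul_cos_pow (r : ℝ) (n : ℕ) :
    ∫ θ in -π..π, (1 + r ^ 2 + 2 * r * cos θ) ^ n
      = 2 * π * ∑ k ∈ range (n + 1), (n.choose k : ℝ) ^ 2 * (r ^ 2) ^ k := by
  have hbinom : ∀ θ : ℝ, (1 + r ^ 2 + 2 * r * cos θ) ^ n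
      = ‖∑ k ∈ range (n + 1), (n.choose k * r ^ k : ℂ) * Complex.exp (k * θ * Complex.I)‖ ^ 2 := by
    intro θ
    rw [← norm_one_add_mul_exp_sq, ← pow_mul, mul_comm 2, pow_mul, ← norm_pow, add_comm, add_pow]
    congr 2
    refine sum_congr rfl fun k _ => ?_
    rw [one_pow, mul_one, mul_pow, ← Complex.exp_nat_mul]
    ring_nf
  simp_rw [hbinom, integral_norm_sq_sum_exp]
  congr 1
  refine sum_congr rfl fun k _ => ?_
  rw [norm_mul, norm_pow, Complex.norm_natCast, Complex.norm_real, Real.norm_eq_abs, mul_pow,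
    ← pow_mul, mul_comm k, pow_mul, sq_abs]

theorem tendsto_nat_mul_one_sub_cos_div_sqrt (t : ℝ) :
    Tendsto (fun n : ℕ => n * (1 - cos (t / √n))) atTop (𝓝 (t ^ 2 / 2)) := by
  have herr : ∀ᶠ n : ℕ in atTop, ‖n * (1 - cos (t / √n)) - t ^ 2 / 2‖ ≤ 5 * t ^ 4 / 96 / n := by
    filter_upwards [eventually_gt_atTop ⌈t ^ 2⌉₊] with n hn
    have hn' : t ^ 2 < n := Nat.lt_of_ceil_lt hn
    have hn0 : (0 : ℝ) < n := (sq_nonneg t).trans_lt hn'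
    have hsq : (t / √n) ^ 2 = t ^ 2 / n := by rw [div_pow, sq_sqrt hn0.le]
    have hu : |t / √n| ≤ 1 := by
      rw [← sq_le_one_iff_abs_le_one, hsq, div_le_one hn0]
      exact hn'.le
    have hcos : |cos (t / √n) - (1 - (t / √n) ^ 2 / 2)| ≤ (t ^ 2 / n) ^ 2 * (5 / 96) := by
      refine (cos_bound hu).trans_eq ?_
      rw [← hsq, ← sq_abs (t / √n), ← pow_mul]
    rw [Real.norm_eq_abs, show n * (1 - cos (t / √n)) - t ^ 2 / 2
        = -(n * (cos (t / √n) - (1 - (t / √n) ^ 2 / 2))) by rw [hsq]; field_simp; ring,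
      abs_neg, abs_mul, abs_of_pos hn0]
    calc n * |cos (t / √n) - (1 - (t / √n) ^ 2 / 2)| ≤ n * ((t ^ 2 / n) ^ 2 * (5 / 96)) := by
          gcongr
      _ = 5 * t ^ 4 / 96 / n := by field_simp
  rw [tendsto_iff_norm_sub_tendsto_zero]
  exact squeeze_zero_norm' (by simpa using herr) (tendsto_const_div_atTop_nhds_zero_nat _)

section Laplace

variable {c : ℝ}

theorem tendsto_one_sub_mul_one_sub_cos_div_sqrt_pow (t : ℝ) :
    Tendsto (fun n : ℕ => (1 - c * (1 - cos (t / √n))) ^ n) atTop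
      (𝓝 (exp (-(c / 2) * t ^ 2))) := by
  have h := (tendsto_nat_mul_one_sub_cos_div_sqrt t).const_mul (-c)
  convert tendsto_one_add_pow_exp_of_tendsto (g := fun n : ℕ => -c * (1 - cos (t / √n)))
    (h.congr fun n => by ring) using 3 with n
  · ring
  · ring

theorem one_sub_mul_one_sub_cos_nonneg (hc : 2 * c ≤ 1) (u : ℝ) : 0 ≤ 1 - c * (1 - cos u) := by
  nlinarith [neg_one_le_cos u, cos_le_one u]

theorem one_sub_mul_one_sub_cos_le_exp (hc : 0 ≤ c) {u : ℝ} (hu : |u| ≤ π) :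
    1 - c * (1 - cos u) ≤ exp (-(2 * c / π ^ 2) * u ^ 2) := by
  calc 1 - c * (1 - cos u) ≤ -(2 * c / π ^ 2) * u ^ 2 + 1 := by
        have := mul_le_mul_of_nonneg_left (cos_le_one_sub_mul_cos_sq hu) hc
        linear_combination this
    _ ≤ exp (-(2 * c / π ^ 2) * u ^ 2) := add_one_le_exp _

theorem one_sub_mul_one_sub_cos_div_sqrt_pow_le (hc : 0 ≤ c) (hc' : 2 * c ≤ 1) {n : ℕ} {t : ℝ}
    (ht : |t| ≤ π * √n) : (1 - c * (1 - cos (t / √n))) ^ n ≤ exp (-(2 * c / π ^ 2) * t ^ 2) := by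
  rcases Nat.eq_zero_or_pos n with rfl | hn
  · simp_all
  have hsqrt : 0 < √(n : ℝ) := sqrt_pos.2 (by exact_mod_cast hn)
  have hu : |t / √n| ≤ π := by rwa [abs_div, abs_of_pos hsqrt, div_le_iff₀ hsqrt]
  calc (1 - c * (1 - cos (t / √n))) ^ n ≤ exp (-(2 * c / π ^ 2) * (t / √n) ^ 2) ^ n :=
        pow_le_pow_left₀ (one_sub_mul_one_sub_cos_nonneg hc' _)
          (one_sub_mul_one_sub_cos_le_exp hc hu) n
    _ = exp (-(2 * c / π ^ 2) * t ^ 2) := by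
        rw [← exp_nat_mul, div_pow, sq_sqrt (Nat.cast_nonneg n)]
        field_simp

theorem mul_intervalIntegral_eq_integral_indicator (f : ℝ → ℝ) {a : ℝ} (ha : 0 ≤ a) :
    a * ∫ θ in -π..π, f θ = ∫ t, (Set.Ioc (-(π * a)) (π * a)).indicator (fun t => f (t / a)) t := by
  rcases ha.eq_or_lt with rfl | ha
  · simp
  rw [integral_indicator measurableSet_Ioc,
    ← intervalIntegral.integral_of_le (by nlinarith [pi_pos]),
    intervalIntegral.integral_comp_div _ ha.ne', neg_div, mul_div_cancel_right₀ _ ha.ne',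
    smul_eq_mul]

theorem tendsto_sqrt_mul_integral_one_sub_mul_one_sub_cos_pow (hc : 0 < c) (hc' : 2 * c ≤ 1) :
    Tendsto (fun n : ℕ => √n * ∫ θ in -π..π, (1 - c * (1 - cos θ)) ^ n) atTop
      (𝓝 √(2 * π / c)) := by
  set F : ℕ → ℝ → ℝ := fun n => (Set.Ioc (-(π * √n)) (π * √n)).indicator
    fun t => (1 - c * (1 - cos (t / √n))) ^ n
  have hmeas (n : ℕ) : AEStronglyMeasurable (F n) volume :=
    (Continuous.aestronglyMeasurable (by fun_prop)).indicator measurableSet_Ioc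
  have hbound (n : ℕ) (t : ℝ) : ‖F n t‖ ≤ exp (-(2 * c / π ^ 2) * t ^ 2) := by
    simp only [F, Set.indicator_apply]
    split_ifs with ht
    · rw [norm_of_nonneg (pow_nonneg (one_sub_mul_one_sub_cos_nonneg hc' _) n)]
      exact one_sub_mul_one_sub_cos_div_sqrt_pow_le hc.le hc' (abs_le.2 ⟨ht.1.le, ht.2⟩)
    · simpa using (exp_pos _).le
  have hlim (t : ℝ) : Tendsto (fun n => F n t) atTop (𝓝 (exp (-(c / 2) * t ^ 2))) := by
    have hwide : Tendsto (fun n : ℕ => π * √n) atTop atTop :=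
      (tendsto_sqrt_atTop.comp tendsto_natCast_atTop_atTop).const_mul_atTop pi_pos
    refine (tendsto_one_sub_mul_one_sub_cos_div_sqrt_pow t).congr' ?_
    filter_upwards [hwide.eventually_gt_atTop |t|] with n hn
    have ht : t ∈ Set.Ioc (-(π * √n)) (π * √n) := ⟨(abs_lt.1 hn).1, (abs_lt.1 hn).2.le⟩
    simp only [F, Set.indicator_of_mem ht]
  have h := tendsto_integral_of_dominated_convergence _ hmeas
    (integrable_exp_neg_mul_sq (by positivity)) (fun n => ae_of_all _ (hbound n))
    (ae_of_all _ hlim)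
  rw [integral_gaussian] at h
  simp_rw [mul_intervalIntegral_eq_integral_indicator _ (sqrt_nonneg _)]
  convert h using 3
  field_simp

end Laplace

theorem tendsto_sum_choose_sq_mul_pow_div_mul_sqrt {r : ℝ} (hr : 0 < r) :
    Tendsto (fun n : ℕ =>
        (∑ k ∈ range (n + 1), (n.choose k : ℝ) ^ 2 * (r ^ 2) ^ k) / (1 + r) ^ (2 * n) * √n)
      atTop (𝓝 ((1 + r) / (2 * √(π * r)))) := by
  set c := 2 * r / (1 + r) ^ 2 with hc_def
  have hc : 0 < c := by positivity
  have hc' : 2 * c ≤ 1 := by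
    rw [mul_div_assoc', div_le_one (by positivity)]
    nlinarith [sq_nonneg (1 - r)]
  have hrepr (n : ℕ) : (∑ k ∈ range (n + 1), (n.choose k : ℝ) ^ 2 * (r ^ 2) ^ k)
      / (1 + r) ^ (2 * n) * √n = (2 * π)⁻¹ * (√n * ∫ θ in -π..π, (1 - c * (1 - cos θ)) ^ n) := by
    have hscale : ∀ θ, (1 - c * (1 - cos θ)) ^ n
        = ((1 + r) ^ (2 * n))⁻¹ * (1 + r ^ 2 + 2 * r * cos θ) ^ n := by
      intro θ
      rw [pow_mul, ← inv_pow, ← mul_pow]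
      congr 1
      rw [hc_def]
      field_simp
      ring
    simp_rw [hscale, intervalIntegral.integral_const_mul, integral_one_add_sq_add_mul_cos_pow]
    field_simp
  simp_rw [hrepr]
  convert (tendsto_sqrt_mul_integral_one_sub_mul_one_sub_cos_pow hc hc').const_mul (2 * π)⁻¹
    using 2
  rw [show 2 * π / c = (1 + r) ^ 2 * (π / r) by rw [hc_def]; field_simp, sqrt_mul (sq_nonneg _),
    sqrt_sq (by positivity), sqrt_div pi_pos.le, sqrt_mul pi_pos.le]
  field_simp
  exact (sq_sqrt pi_pos.le).symm

theorem two_rpow_neg_one_div_four : (2 : ℝ) ^ (-(1 : ℝ) / 4) = (√√2)⁻¹ := by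
  rw [sqrt_eq_rpow, sqrt_eq_rpow, ← rpow_mul zero_le_two, ← rpow_neg zero_le_two]
  norm_num

/-- asymptotics of the central Delannoy numbers
D(n,n) ~ (√2−1)^{−2n} · n^{−1/2} · 2^{−1/4}/((2−√2)√(2π))
(Example 3.2 of Pemantle–Wilson, "Asymptotics of multivariate sequences I"). -/
theorem statement15 :
    Tendsto (fun n : ℕ =>
        (delannoy n n : ℝ) * (Real.sqrt 2 - 1) ^ (2 * n) * Real.sqrt n)
      atTop
      (𝓝 ((2 : ℝ) ^ (-(1 : ℝ) / 4) / ((2 - Real.sqrt 2) * Real.sqrt (2 * Real.pi)))) := by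
  have hsq : √2 ^ 2 = 2 := sq_sqrt zero_le_two
  have hlim := tendsto_sum_choose_sq_mul_pow_div_mul_sqrt (sqrt_pos.2 (zero_lt_two' ℝ))
  rw [hsq] at hlim
  convert hlim using 2 with n
  · have hconj : (√2 - 1) ^ (2 * n) * (1 + √2) ^ (2 * n) = 1 := by
      rw [← mul_pow, show (√2 - 1) * (1 + √2) = 1 by linear_combination hsq, one_pow]
    rw [delannoy_self, eq_inv_of_mul_eq_one_left hconj]
    push_cast
    ring
  · rw [two_rpow_neg_one_div_four, sqrt_mul zero_le_two, sqrt_mul pi_pos.le]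
    have hq : 0 < √√2 := by positivity
    have h2 : (0 : ℝ) < 2 - √2 := by nlinarith [sqrt_nonneg 2]
    field_simp
    linear_combination (√2 - 1) * hsq
end
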